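/- For all nonnegative integers n, m, s one has A_{1/2}(n+mp^{s+1})/φ(A_{1/2}(⌊n/p⌋+mp^s)) − A_{1/2}(n)/φ(A_{1/2}(⌊n/p⌋)) ∈ [p^{s+1}]_q·R (as elements of Q). -/

import Mathlib

/- Setting (following Dwork-type q-congruences / q-hypergeometric papers):
`p` is an odd prime, `R = ℤ_p[[q−1]]` is implemented as `PowerSeries ℤ_[p]`, the power-series
variable `PowerSeries.X` standing for `q − 1`. -/

noncomputable section
open PowerSeries
namespace QDwork

variable (p : ℕ) [Fact p.Prime]

/-- `R = ℤ_p[[q−1]]`. -/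
abbrev R : Type := PowerSeries ℤ_[p]

/-- `q = 1 + (q−1) ∈ R`. -/
def qq : R p := 1 + PowerSeries.X

/-- `q^a = Σ_{i≥0} binom(a,i)(q−1)^i ∈ R` for `a ∈ ℤ_p`, using the p-adically interpolated
binomial coefficients `Ring.choose` (`ℤ_p` is a binomial ring). -/
def qpow (a : ℤ_[p]) : R p := PowerSeries.mk fun i => Ring.choose a i

/-- The q-number `[a]_q = (q^a−1)/(q−1) = Σ_{i≥1} binom(a,i)(q−1)^{i−1} ∈ R` for `a ∈ ℤ_p`. -/
def qnum (a : ℤ_[p]) : R p := PowerSeries.mk fun i => Ring.choose a (i + 1)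

/-- The q-number `[n]_q = 1 + q + ⋯ + q^{n−1} ∈ R` of a natural number `n`. -/
def qnat (n : ℕ) : R p := ∑ i ∈ Finset.range n, qq p ^ i

/-- `1/2 ∈ ℤ_p` (recall `p` is odd, so `2` is a unit of `ℤ_p`). -/
def half : ℤ_[p] := Ring.inverse 2

/-- The Frobenius endomorphism `φ` of `R = ℤ_p[[q−1]]`: the ring endomorphism fixing `ℤ_p`
with `φ(q) = q^p`, i.e. the substitution `f(q−1) ↦ f(q^p−1)` (legitimate since `q^p−1` has
zero constant term), described here through its coefficients. -/
def phiR (f : R p) : R p :=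
  PowerSeries.mk fun n => ∑ i ∈ Finset.range (n + 1),
    PowerSeries.coeff i f * PowerSeries.coeff n ((qq p ^ p - 1) ^ i)

/-- `Q = Frac(R)`. -/
abbrev Q : Type := FractionRing (R p)

/-- The canonical injection `R → Q`. -/
def ι : R p →+* Q p := algebraMap (R p) (Q p)

/-- `q ∈ Q`. -/
def qQ : Q p := ι p (qq p)

/-- The extension of the Frobenius `φ` to `Q = Frac(R)` (computed via a choice of a fraction
representation `x = r/s`, `φ(x) = φ(r)/φ(s)`). -/
def phiQ (x : Q p) : Q p :=
  ι p (phiR p (IsLocalization.sec (nonZeroDivisors (R p)) x).1) /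
    ι p (phiR p ((IsLocalization.sec (nonZeroDivisors (R p)) x).2 : R p))

/-- `C_θ(n) = ∏_{ν=0}^{n−1} [θ+ν]_q ∈ R`. -/
def Cq (θ : ℤ_[p]) (n : ℕ) : R p := ∏ ν ∈ Finset.range n, qnum p (θ + (ν : ℤ_[p]))

/-- `A_{1/2}(n) = C_{1/2}(n)/C_1(n) ∈ Q`. -/
def Ahalf (n : ℕ) : Q p := ι p (Cq p (half p) n) / ι p (Cq p 1 n)

/-!
Write `N = p^{s+1}`. In `C_θ(n)`, each factor `[θ + ν]_q` with `p ∣ θ + ν` equals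
`[p]_q φ([(θ + ν)/p]_q)`. For `θ = 1/2` and `θ = 1` these factors assemble into
`[p]_q^{⌊n/p⌋} φ(C_θ(⌊n/p⌋))`, up to one extra factor `T(n)` when the last block is
incomplete. Hence `A_{1/2}(n)/φ(A_{1/2}(⌊n/p⌋)) = T(n) G(n) / H(n)`, where `G` and `H` are the
products of the remaining q-numbers, all of p-adic units, so that `H(n)` is a unit of `R`.

Iterating `[p x]_q = [p]_q φ([x]_q)` gives `[N]_q ∣ [N c]_q`, hence `[x + N c]_q ≡ [x]_q` mod
`[N]_q` for all `x, c ∈ ℤ_p`. Modulo `[N]_q` we may therefore replace `θ` by an integer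
`t ≡ θ (mod N)`, which turns `G(n)` and `H(n)` into products of `n` consecutive terms of the
sequence `j ↦ [j]_q` (`p ∤ j`), `1` (`p ∣ j`), which is `N`-periodic mod `[N]_q`. Going from `n`
to `n + mN` thus multiplies both `G` and `H` by `W^m`, `W` the product over one period, and
leaves `T` unchanged; cross-multiplying gives the congruence.
-/

open Finset

lemma mul_add_lt_iff_lt_div_add {d c k n : ℕ} (hc : c < d) :
    d * k + c < n ↔ k < n / d + if c < n % d then 1 else 0 := by
  have hn := Nat.div_add_mod n d
  have hr := Nat.mod_lt n (Nat.zero_lt_of_lt hc)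
  rcases lt_trichotomy k (n / d) with h | rfl | h
  · have := Nat.mul_le_mul_left d (Nat.succ_le_of_lt h)
    rw [Nat.mul_succ] at this
    split_ifs <;> omega
  · split_ifs <;> omega
  · have := Nat.mul_le_mul_left d (Nat.succ_le_of_lt h)
    rw [Nat.mul_succ] at this
    split_ifs <;> omega

lemma prod_filter_mod_eq {M : Type*} [CommMonoid M] (f : ℕ → M) {d c : ℕ} (hc : c < d)
    (n : ℕ) :
    ∏ ν ∈ (range n).filter (· % d = c), f ν =
      (∏ k ∈ range (n / d), f (d * k + c)) * if c < n % d then f (d * (n / d) + c) else 1 := by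
  have hinj : Function.Injective fun k => d * k + c := fun k l h =>
    Nat.eq_of_mul_eq_mul_left (Nat.zero_lt_of_lt hc) (Nat.add_right_cancel h)
  have hset : (range n).filter (· % d = c) =
      (range (n / d + if c < n % d then 1 else 0)).image fun k => d * k + c := by
    ext ν
    simp only [mem_filter, mem_range, mem_image]
    constructor
    · rintro ⟨hν, hmod⟩
      have hdiv : d * (ν / d) + c = ν := hmod ▸ Nat.div_add_mod ν d
      exact ⟨ν / d, (mul_add_lt_iff_lt_div_add hc).1 (hdiv.symm ▸ hν), hdiv⟩
    · rintro ⟨k, hk, rfl⟩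
      exact ⟨(mul_add_lt_iff_lt_div_add hc).2 hk, by rw [Nat.mul_add_mod, Nat.mod_eq_of_lt hc]⟩
  rw [hset, prod_image fun k _ l _ h => hinj h]
  split_ifs <;> simp [prod_range_succ]

lemma mod_eq_iff_dvd_add {d t c : ℕ} (hc : c < d) (htc : d ∣ t + c) (ν : ℕ) :
    ν % d = c ↔ d ∣ t + ν := by
  have h0 : t + c ≡ 0 [MOD d] := Nat.modEq_zero_iff_dvd.2 htc
  rw [← Nat.mod_eq_of_lt hc, ← Nat.ModEq, ← Nat.modEq_zero_iff_dvd]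
  exact ⟨fun h => (h.add_left t).trans h0,
    fun h => Nat.ModEq.add_left_cancel' t (h.trans h0.symm)⟩

lemma prod_Ico_add_eq_prod_range {M : Type*} [CommMonoid M] {f : ℕ → M} {N : ℕ}
    (hf : Function.Periodic f N) (a : ℕ) :
    ∏ j ∈ Ico a (a + N), f j = ∏ j ∈ range N, f j := by
  rcases N.eq_zero_or_pos with rfl | hN
  · simp
  induction a with
  | zero => rw [zero_add, range_eq_Ico]
  | succ a ih =>
    rw [prod_eq_prod_Ico_succ_bot (by omega)] at ih
    rw [← ih, add_right_comm, prod_Ico_succ_top (by omega), hf, mul_comm]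

lemma prod_Ico_add_mul_eq_pow {M : Type*} [CommMonoid M] {f : ℕ → M} {N : ℕ}
    (hf : Function.Periodic f N) (a m : ℕ) :
    ∏ j ∈ Ico a (a + m * N), f j = (∏ j ∈ range N, f j) ^ m := by
  induction m with
  | zero => simp
  | succ m ih =>
    rw [add_mul, one_mul, ← add_assoc,
      ← prod_Ico_consecutive _ (Nat.le_add_right a (m * N)) (Nat.le_add_right _ N), ih,
      prod_Ico_add_eq_prod_range hf, pow_succ]

lemma add_mul_pow_succ_div (d n m s : ℕ) (hd : 0 < d) :
    (n + m * d ^ (s + 1)) / d = n / d + m * d ^ s := by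
  rw [pow_succ, ← mul_assoc, Nat.add_mul_div_right _ _ hd]

lemma add_mul_pow_succ_mod (d n m s : ℕ) : (n + m * d ^ (s + 1)) % d = n % d := by
  rw [pow_succ, ← mul_assoc, Nat.add_mul_mod_self_right]

lemma exists_div_sub_div_eq_algebraMap_mul {A K : Type*} [CommRing A] [Field K] [Algebra A K]
    {a b a' b' d : A} (hb : IsUnit b) (hb' : IsUnit b') (h : d ∣ a * b' - a' * b) :
    ∃ r, algebraMap A K a / algebraMap A K b - algebraMap A K a' / algebraMap A K b' =
      algebraMap A K (d * r) := by
  obtain ⟨w, hw⟩ := h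
  obtain ⟨u, rfl⟩ := hb
  obtain ⟨u', rfl⟩ := hb'
  refine ⟨w * ↑(u * u')⁻¹, ?_⟩
  have hu : algebraMap A K u ≠ 0 := (u.isUnit.map _).ne_zero
  have hu' : algebraMap A K u' ≠ 0 := (u'.isUnit.map _).ne_zero
  rw [div_sub_div _ _ hu hu', div_eq_iff (mul_ne_zero hu hu')]
  simp only [← map_mul, ← map_sub]
  congr 1
  have hinv := (u * u').inv_mul
  rw [Units.val_mul] at hinv
  linear_combination hw - d * w * hinv

section

variable {p}

lemma qpow_eq_binomialSeries (a : ℤ_[p]) : qpow p a = binomialSeries ℤ_[p] a := by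
  ext i
  simp [qpow]

lemma qpow_add (a b : ℤ_[p]) : qpow p (a + b) = qpow p a * qpow p b := by
  simp only [qpow_eq_binomialSeries, binomialSeries_add]

lemma qpow_natCast (n : ℕ) : qpow p n = qq p ^ n := by
  rw [qpow_eq_binomialSeries, binomialSeries_nat, qq]

lemma X_mul_qnum (a : ℤ_[p]) : X * qnum p a = qpow p a - 1 := by
  ext (_ | i)
  · simp [qnum, qpow]
  · simp [qnum, qpow, coeff_one]

lemma X_mul_qnat (n : ℕ) : X * qnat p n = qq p ^ n - 1 := by
  rw [mul_comm, qnat, ← geom_sum_mul, qq, add_sub_cancel_left]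

lemma qnum_natCast (n : ℕ) : qnum p n = qnat p n :=
  mul_left_cancel₀ X_ne_zero (by rw [X_mul_qnum, X_mul_qnat, qpow_natCast])

lemma qnum_add (a b : ℤ_[p]) : qnum p (a + b) = qnum p a + qpow p a * qnum p b := by
  apply mul_left_cancel₀ X_ne_zero
  linear_combination X_mul_qnum (a + b) - X_mul_qnum a - qpow p a * X_mul_qnum b + qpow_add a b

lemma qnat_add (m n : ℕ) : qnat p (m + n) = qnat p m + qq p ^ m * qnat p n := by
  simpa [← qnum_natCast, ← qpow_natCast] using qnum_add (p := p) m n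

lemma constantCoeff_qnum (a : ℤ_[p]) : constantCoeff (qnum p a) = a := by
  simp [qnum, ← coeff_zero_eq_constantCoeff_apply]

lemma qnum_ne_zero {a : ℤ_[p]} (ha : a ≠ 0) : qnum p a ≠ 0 :=
  fun h => ha (by simpa [h] using (constantCoeff_qnum (p := p) a).symm)

lemma isUnit_qnum {a : ℤ_[p]} (ha : IsUnit a) : IsUnit (qnum p a) := by
  rwa [isUnit_iff_constantCoeff, constantCoeff_qnum]

lemma p_dvd_natCast_iff {k : ℕ} : (p : ℤ_[p]) ∣ k ↔ p ∣ k := by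
  rw [← PadicInt.norm_lt_one_iff_dvd, PadicInt.norm_natCast_lt_one_iff]

lemma isUnit_natCast_of_not_dvd {k : ℕ} (hk : ¬ p ∣ k) : IsUnit (k : ℤ_[p]) := by
  rw [PadicInt.isUnit_iff, PadicInt.norm_natCast_eq_one_iff,
    Nat.Prime.coprime_iff_not_dvd Fact.out]
  exact hk

lemma two_mul_half (hp : p ≠ 2) : 2 * half p = 1 := by
  refine Ring.mul_inverse_cancel 2 ?_
  exact_mod_cast isUnit_natCast_of_not_dvd (k := 2) fun h =>
    hp ((Nat.prime_dvd_prime_iff_eq Fact.out Nat.prime_two).1 h)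

lemma half_add_natCast_ne_zero (hp : p ≠ 2) (ν : ℕ) : half p + ν ≠ 0 := fun h => by
  have : ((2 * ν + 1 : ℕ) : ℤ_[p]) = 0 := by
    push_cast
    linear_combination 2 * h - two_mul_half hp
  exact Nat.succ_ne_zero _ (Nat.cast_eq_zero.1 this)

lemma half_add_eq_p_mul (hp : p ≠ 2) : half p + ((p - 1) / 2 : ℕ) = p * half p := by
  have hodd : p % 2 = 1 := (Nat.Prime.eq_two_or_odd Fact.out).resolve_left hp
  have h : ((2 * ((p - 1) / 2) + 1 : ℕ) : ℤ_[p]) = p := by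
    congr 1
    omega
  push_cast at h
  apply mul_left_cancel₀ (two_ne_zero' ℤ_[p])
  linear_combination h + (1 - p) * two_mul_half hp

variable (p) in
lemma pred_div_two_lt : (p - 1) / 2 < p :=
  (Nat.div_le_self _ _).trans_lt (Nat.sub_one_lt (Fact.out : p.Prime).ne_zero)

lemma one_add_pred_eq_p_mul : (1 : ℤ_[p]) + (p - 1 : ℕ) = p * 1 := by
  rw [Nat.cast_sub (Fact.out : p.Prime).one_le]
  ring

lemma one_add_natCast_ne_zero (ν : ℕ) : (1 : ℤ_[p]) + ν ≠ 0 := by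
  have h : ((ν + 1 : ℕ) : ℤ_[p]) ≠ 0 := Nat.cast_ne_zero.2 ν.succ_ne_zero
  rwa [Nat.cast_succ, add_comm] at h

lemma qq_pow_sub_one_eq_X_mul_qnat : qq p ^ p - 1 = X * qnat p p := (X_mul_qnat p).symm

lemma hasSubst_qq_pow_sub_one : HasSubst (qq p ^ p - 1) :=
  HasSubst.of_constantCoeff_zero' (by simp [qq])

lemma coeff_qq_pow_sub_one_pow_of_lt {n d : ℕ} (h : n < d) :
    coeff n ((qq p ^ p - 1) ^ d) = 0 := by
  rw [qq_pow_sub_one_eq_X_mul_qnat, mul_pow, coeff_X_pow_mul', if_neg (not_le.2 h)]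

variable (p) in
def frob : R p →+* R p := (substAlgHom (hasSubst_qq_pow_sub_one (p := p))).toRingHom

lemma coe_frob : ⇑(frob p) = subst (qq p ^ p - 1) := coe_substAlgHom _

lemma frob_apply (f : R p) : frob p f = phiR p f := by
  ext n
  rw [coe_frob, coeff_subst' hasSubst_qq_pow_sub_one, phiR, coeff_mk]
  refine finsum_eq_sum_of_support_subset _ fun d hd => mem_range.2 ?_
  by_contra h
  exact hd (by simp [coeff_qq_pow_sub_one_pow_of_lt (p := p) (Nat.lt_of_succ_le (not_lt.1 h))])

lemma frob_X : frob p X = qq p ^ p - 1 := by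
  rw [coe_frob, subst_X hasSubst_qq_pow_sub_one]

lemma frob_qq : frob p (qq p) = qq p ^ p := by
  rw [qq, map_add, map_one, frob_X, ← qq, add_sub_cancel]

lemma constantCoeff_frob (f : R p) : constantCoeff (frob p f) = constantCoeff f := by
  simp only [← coeff_zero_eq_constantCoeff_apply, frob_apply, phiR, coeff_mk]
  simp

lemma constantCoeff_qnat (n : ℕ) : constantCoeff (qnat p n) = n := by
  simp [qnat, qq]

lemma frob_injective : Function.Injective (frob p) := by
  refine (injective_iff_map_eq_zero _).2 fun f hf => ?_
  by_contra hf0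
  rw [← X_pow_order_mul_divXPowOrder (f := f), map_mul, map_pow, frob_X,
    qq_pow_sub_one_eq_X_mul_qnat, mul_pow, mul_assoc] at hf
  have h := congrArg constantCoeff ((mul_eq_zero.1 hf).resolve_left (pow_ne_zero _ X_ne_zero))
  rw [map_mul, map_pow, constantCoeff_qnat, constantCoeff_frob, map_zero,
    constantCoeff_divXPowOrder] at h
  exact (mul_ne_zero (pow_ne_zero _ (Nat.cast_ne_zero.2 (Fact.out : p.Prime).ne_zero))
    (coeff_order hf0)) h

lemma frob_qpow (a : ℤ_[p]) : frob p (qpow p a) = qpow p (p * a) := by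
  ext n
  have hnat (k : ℕ) : coeff n (frob p (qpow p k)) = coeff n (qpow p (p * k)) := by
    rw [qpow_natCast, map_pow, frob_qq, ← pow_mul, ← Nat.cast_mul, qpow_natCast]
  have hlhs : Continuous fun a : ℤ_[p] => coeff n (frob p (qpow p a)) := by
    simp only [frob_apply, phiR, qpow, coeff_mk]
    fun_prop
  have hrhs : Continuous fun a : ℤ_[p] => coeff n (qpow p (p * a)) := by
    simp only [qpow, coeff_mk]
    fun_prop
  exact congrFun (PadicInt.denseRange_natCast.equalizer hlhs hrhs (funext hnat)) a

lemma qnum_mul_p (a : ℤ_[p]) : qnum p (p * a) = qnat p p * frob p (qnum p a) := by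
  apply mul_left_cancel₀ X_ne_zero
  have hqpow : qpow p a = X * qnum p a + 1 := by rw [X_mul_qnum, sub_add_cancel]
  rw [X_mul_qnum, ← frob_qpow, hqpow, map_add, map_mul, frob_X, qq_pow_sub_one_eq_X_mul_qnat,
    map_one, add_sub_cancel_right, mul_assoc]

lemma qnat_pow_succ (j : ℕ) : qnat p (p ^ (j + 1)) = qnat p p * frob p (qnat p (p ^ j)) := by
  rw [← qnum_natCast (p ^ j), ← qnum_mul_p, ← qnum_natCast, pow_succ', Nat.cast_mul]

lemma qnat_pow_dvd_qnum (j : ℕ) (c : ℤ_[p]) : qnat p (p ^ j) ∣ qnum p (p ^ j * c) := by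
  induction j with
  | zero => simp [qnat, qq]
  | succ j ih =>
    rw [qnat_pow_succ, pow_succ', mul_assoc, qnum_mul_p]
    exact mul_dvd_mul_left _ (map_dvd (frob p) ih)

lemma qnat_pow_dvd_qnum_add_sub (j : ℕ) (x c : ℤ_[p]) :
    qnat p (p ^ j) ∣ qnum p (x + p ^ j * c) - qnum p x := by
  rw [qnum_add, add_sub_cancel_left]
  exact dvd_mul_of_dvd_right (qnat_pow_dvd_qnum j c) _

lemma ι_injective : Function.Injective (ι p) := IsFractionRing.injective (R p) (Q p)

lemma ι_ne_zero {f : R p} (hf : f ≠ 0) : ι p f ≠ 0 := (map_ne_zero_iff _ ι_injective).2 hf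

lemma ι_frob_ne_zero {f : R p} (hf : f ≠ 0) : ι p (frob p f) ≠ 0 :=
  ι_ne_zero ((map_ne_zero_iff _ frob_injective).2 hf)

lemma phiQ_div (a : R p) {b : R p} (hb : b ≠ 0) :
    phiQ p (ι p a / ι p b) = ι p (frob p a) / ι p (frob p b) := by
  set x := ι p a / ι p b with hx
  set r := (IsLocalization.sec (nonZeroDivisors (R p)) x).1
  set t := (IsLocalization.sec (nonZeroDivisors (R p)) x).2
  have ht : (t : R p) ≠ 0 := nonZeroDivisors.ne_zero t.2
  have hspec : x * ι p t = ι p r := IsLocalization.sec_spec (nonZeroDivisors (R p)) x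
  have hrel : a * t = r * b := by
    apply ι_injective
    rw [map_mul, map_mul, ← hspec, hx]
    field_simp [ι_ne_zero hb]
  rw [phiQ, ← frob_apply, ← frob_apply,
    div_eq_div_iff (ι_frob_ne_zero ht) (ι_frob_ne_zero hb)]
  simp only [← map_mul]
  exact congrArg (ι p ∘ frob p) hrel.symm

variable (p) in
def CqCoprime (θ : ℤ_[p]) (c n : ℕ) : R p :=
  ∏ ν ∈ (range n).filter (· % p ≠ c), qnum p (θ + ν)

variable (p) in
def tailFactor (θ : ℤ_[p]) (c n : ℕ) : R p :=
  if c < n % p then qnum p (p * (θ + (n / p : ℕ))) else 1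

lemma Cq_eq_mul {θ θ' : ℤ_[p]} {c : ℕ} (hc : c < p) (hθ : θ + c = p * θ') (n : ℕ) :
    Cq p θ n = qnat p p ^ (n / p) * frob p (Cq p θ' (n / p)) *
      (tailFactor p θ' c n * CqCoprime p θ c n) := by
  have hfac (k : ℕ) : qnum p (θ + (p * k + c : ℕ)) = qnum p (p * (θ' + k)) := by
    congr 1
    push_cast
    linear_combination hθ
  rw [Cq, ← prod_filter_mul_prod_filter_not (range n) (· % p = c), prod_filter_mod_eq _ hc,
    tailFactor, CqCoprime, Cq, map_prod]
  simp only [hfac, qnum_mul_p, prod_mul_distrib, prod_const, card_range]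
  ring

lemma Cq_ne_zero {θ : ℤ_[p]} (hθ : ∀ ν : ℕ, θ + ν ≠ 0) (n : ℕ) : Cq p θ n ≠ 0 :=
  prod_ne_zero_iff.2 fun ν _ => qnum_ne_zero (hθ ν)

lemma tailFactor_one (n : ℕ) : tailFactor p 1 (p - 1) n = 1 :=
  if_neg (by have := Nat.mod_lt n (Fact.out : p.Prime).pos; omega)

lemma isUnit_CqCoprime_one (n : ℕ) : IsUnit (CqCoprime p 1 (p - 1) n) := by
  have hc : p - 1 < p := Nat.sub_one_lt (Fact.out : p.Prime).ne_zero
  have hdvd : p ∣ 1 + (p - 1) := by rw [Nat.add_sub_cancel' (Fact.out : p.Prime).one_le]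
  refine IsUnit.prod_iff.2 fun ν hν => isUnit_qnum ?_
  rw [← Nat.cast_one, ← Nat.cast_add]
  exact isUnit_natCast_of_not_dvd (mt (mod_eq_iff_dvd_add hc hdvd ν).2 (mem_filter.1 hν).2)

lemma Ahalf_div_phiQ (hp : p ≠ 2) (n : ℕ) :
    Ahalf p n / phiQ p (Ahalf p (n / p)) =
      ι p (tailFactor p (half p) ((p - 1) / 2) n * CqCoprime p (half p) ((p - 1) / 2) n) /
        ι p (CqCoprime p 1 (p - 1) n) := by
  rw [Ahalf, Ahalf, phiQ_div _ (Cq_ne_zero one_add_natCast_ne_zero _), div_div_div_eq,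
    div_eq_div_iff (mul_ne_zero (ι_ne_zero (Cq_ne_zero one_add_natCast_ne_zero _))
      (ι_frob_ne_zero (Cq_ne_zero (half_add_natCast_ne_zero hp) _)))
      (ι_ne_zero (isUnit_CqCoprime_one n).ne_zero)]
  simp only [← map_mul]
  rw [Cq_eq_mul (pred_div_two_lt p) (half_add_eq_p_mul hp) n,
    Cq_eq_mul (Nat.sub_one_lt (Fact.out : p.Prime).ne_zero) one_add_pred_eq_p_mul n,
    tailFactor_one]
  congr 1
  ring

variable (p) in
def modQnat (N : ℕ) : R p →+* R p ⧸ Ideal.span {qnat p N} := Ideal.Quotient.mk _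

lemma modQnat_eq_iff_dvd_sub {N : ℕ} {f g : R p} :
    modQnat p N f = modQnat p N g ↔ qnat p N ∣ f - g :=
  Ideal.Quotient.eq.trans Ideal.mem_span_singleton

variable (p) in
def qnatCoprime (j : ℕ) : R p := if p ∣ j then 1 else qnat p j

lemma periodic_modQnat_qnatCoprime {N : ℕ} (hN : p ∣ N) :
    Function.Periodic (fun j => modQnat p N (qnatCoprime p j)) N := fun j => by
  simp only [qnatCoprime, Nat.dvd_add_left hN]
  split_ifs
  · rfl
  · exact modQnat_eq_iff_dvd_sub.2 ⟨qq p ^ j, by rw [qnat_add]; ring⟩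

lemma exists_modQnat_CqCoprime_eq_prod_Ico {θ θ' : ℤ_[p]} {c : ℕ} (hc : c < p)
    (hθ : θ + c = p * θ') (s : ℕ) : ∃ t : ℕ, ∀ n : ℕ,
      modQnat p (p ^ (s + 1)) (CqCoprime p θ c n) =
        modQnat p (p ^ (s + 1)) (∏ j ∈ Ico t (t + n), qnatCoprime p j) := by
  obtain ⟨c', hc'⟩ := Ideal.mem_span_singleton.1 (PadicInt.appr_spec (s + 1) θ)
  set t := PadicInt.appr θ (s + 1)
  have htc : p ∣ t + c := p_dvd_natCast_iff.1
    ⟨θ' - p ^ s * c', by push_cast; linear_combination hθ - hc'⟩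
  refine ⟨t, fun n => ?_⟩
  rw [CqCoprime, prod_filter, prod_Ico_eq_prod_range, add_tsub_cancel_left, map_prod, map_prod]
  refine prod_congr rfl fun ν _ => ?_
  rw [qnatCoprime]
  by_cases hν : ν % p = c
  · rw [if_neg (not_not.2 hν), if_pos ((mod_eq_iff_dvd_add hc htc ν).1 hν)]
  · rw [if_pos hν, if_neg (mt (mod_eq_iff_dvd_add hc htc ν).2 hν), ← qnum_natCast (t + ν),
      modQnat_eq_iff_dvd_sub]
    have hshift : θ + ν = (t + ν : ℕ) + p ^ (s + 1) * c' := by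
      push_cast
      linear_combination hc'
    exact hshift ▸ qnat_pow_dvd_qnum_add_sub (s + 1) _ c'

lemma modQnat_CqCoprime_add_mul {θ θ' : ℤ_[p]} {c : ℕ} (hc : c < p) (hθ : θ + c = p * θ')
    (s n m : ℕ) :
    modQnat p (p ^ (s + 1)) (CqCoprime p θ c (n + m * p ^ (s + 1))) =
      modQnat p (p ^ (s + 1)) (CqCoprime p θ c n) *
        (∏ j ∈ range (p ^ (s + 1)), modQnat p (p ^ (s + 1)) (qnatCoprime p j)) ^ m := by
  obtain ⟨t, ht⟩ := exists_modQnat_CqCoprime_eq_prod_Ico hc hθ s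
  rw [ht, ht, ← add_assoc,
    ← prod_Ico_consecutive _ (Nat.le_add_right t n) (Nat.le_add_right _ _), map_mul, map_prod,
    map_prod, prod_Ico_add_mul_eq_pow
      (periodic_modQnat_qnatCoprime (dvd_pow_self p (Nat.add_one_ne_zero s)))]

lemma modQnat_tailFactor_add_mul (θ : ℤ_[p]) (c s n m : ℕ) :
    modQnat p (p ^ (s + 1)) (tailFactor p θ c (n + m * p ^ (s + 1))) =
      modQnat p (p ^ (s + 1)) (tailFactor p θ c n) := by
  rw [tailFactor, tailFactor, add_mul_pow_succ_mod,
    add_mul_pow_succ_div _ _ _ _ (Fact.out : p.Prime).pos]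
  split_ifs
  · have hshift : (p : ℤ_[p]) * (θ + (n / p + m * p ^ s : ℕ)) =
        p * (θ + (n / p : ℕ)) + p ^ (s + 1) * m := by push_cast; ring
    rw [hshift, modQnat_eq_iff_dvd_sub]
    exact qnat_pow_dvd_qnum_add_sub _ _ _
  · rfl

end

/-- For all `n, m, s ∈ ℕ`:
`A_{1/2}(n+mp^{s+1})/φ(A_{1/2}(⌊n/p⌋+mp^s)) − A_{1/2}(n)/φ(A_{1/2}(⌊n/p⌋)) ∈ [p^{s+1}]_q·R`. -/
theorem dwork_corollary_2_ii (hp : p ≠ 2) (n m s : ℕ) :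
    ∃ r : R p,
      Ahalf p (n + m * p ^ (s + 1)) / phiQ p (Ahalf p (n / p + m * p ^ s)) -
        Ahalf p n / phiQ p (Ahalf p (n / p)) = ι p (qnat p (p ^ (s + 1)) * r) := by
  rw [← add_mul_pow_succ_div _ _ _ _ (Fact.out : p.Prime).pos, Ahalf_div_phiQ hp,
    Ahalf_div_phiQ hp]
  refine exists_div_sub_div_eq_algebraMap_mul (isUnit_CqCoprime_one _) (isUnit_CqCoprime_one _) ?_
  rw [← modQnat_eq_iff_dvd_sub, map_mul, map_mul, map_mul, map_mul, modQnat_tailFactor_add_mul,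
    modQnat_CqCoprime_add_mul (pred_div_two_lt p) (half_add_eq_p_mul hp),
    modQnat_CqCoprime_add_mul (Nat.sub_one_lt (Fact.out : p.Prime).ne_zero) one_add_pred_eq_p_mul]
  ring

end QDwork
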